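/- arXiv:2304.08889 — 4 statements merged into one kernel-verified Lean document; each statement's English description precedes it below -/
import Mathlib

section
/- Let f : ℝⁿ → ℝⁿ be continuous, X ⊆ ℝⁿ closed, M ⊆ X closed, and T > 0. Suppose v : ℝ × ℝⁿ → ℝ is of class C¹ and satisfies: ∂_t v(t,y) + ⟨∇_x v(t,y), f(y)⟩ ≤ 0 for all (t,y) ∈ [0,T] × X, and v(T,y) ≥ 0 for all y ∈ M. Then the region of attraction R_T^M is contained in {x₀ ∈ ℝⁿ : v(0,x₀) ≥ 0}. -/
open Set

/-! A trajectory of `x' = f(x)` on `[0,T]` inside `X` keeps `v` nonincreasing along its graph,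
since `t ↦ v (t, x t)` has derivative `∂ₜ v + ⟨∇ₓ v, f⟩ ≤ 0`. Hence `v (0, x₀) ≥ v (T, x T) ≥ 0`
whenever `x T ∈ M`. -/

/-- The region of attraction `R_T^M`: initial conditions `x₀` from which some solution of
`x' = f(x)` stays in `X` on `[0,T]` and hits the target `M` at time `T`. -/
def RoA {n : ℕ} (f : EuclideanSpace ℝ (Fin n) → EuclideanSpace ℝ (Fin n))
    (X M : Set (EuclideanSpace ℝ (Fin n))) (T : ℝ) : Set (EuclideanSpace ℝ (Fin n)) :=
  {x₀ | ∃ x : ℝ → EuclideanSpace ℝ (Fin n), x 0 = x₀ ∧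
    (∀ t ∈ Icc (0 : ℝ) T, HasDerivAt x (f (x t)) t) ∧
    (∀ t ∈ Icc (0 : ℝ) T, x t ∈ X) ∧ x T ∈ M}

section GraphComposition

variable {E : Type*} [NormedAddCommGroup E] [NormedSpace ℝ E]

theorem HasFDerivAt.hasDerivAt_comp_graph {v : ℝ × E → ℝ} {v' : ℝ × E →L[ℝ] ℝ}
    {x : ℝ → E} {x' : E} {t : ℝ} (hv : HasFDerivAt v v' (t, x t)) (hx : HasDerivAt x x' t) :
    HasDerivAt (fun s => v (s, x s)) (v' (1, x')) t :=
  hv.comp_hasDerivAt t ((hasDerivAt_id t).prodMk hx)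

theorem antitoneOn_comp_graph_of_fderiv_nonpos {v : ℝ × E → ℝ} (hv : Differentiable ℝ v)
    {x x' : ℝ → E} {a b : ℝ} (hx : ∀ t ∈ Icc a b, HasDerivAt x (x' t) t)
    (hdecr : ∀ t ∈ Ioo a b, fderiv ℝ v (t, x t) (1, x' t) ≤ 0) :
    AntitoneOn (fun t => v (t, x t)) (Icc a b) := by
  have hderiv : ∀ t ∈ Icc a b,
      HasDerivAt (fun s => v (s, x s)) (fderiv ℝ v (t, x t) (1, x' t)) t := fun t ht =>
    (hv _).hasFDerivAt.hasDerivAt_comp_graph (hx t ht)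
  refine antitoneOn_of_hasDerivWithinAt_nonpos (f' := fun t => fderiv ℝ v (t, x t) (1, x' t))
    (convex_Icc a b)
    (fun t ht => (hderiv t ht).continuousAt.continuousWithinAt) (fun t ht => ?_) ?_
  · rw [interior_Icc] at ht ⊢
    exact (hderiv t (Ioo_subset_Icc_self ht)).hasDerivWithinAt
  · simpa only [interior_Icc] using hdecr

end GraphComposition

theorem sostab_stmt1_general {n : ℕ}
    (f : EuclideanSpace ℝ (Fin n) → EuclideanSpace ℝ (Fin n))
    (X : Set (EuclideanSpace ℝ (Fin n)))
    (M : Set (EuclideanSpace ℝ (Fin n)))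
    (T : ℝ) (hT : 0 < T)
    (v : ℝ × EuclideanSpace ℝ (Fin n) → ℝ) (hv : ContDiff ℝ 1 v)
    (hdecr : ∀ t ∈ Icc (0 : ℝ) T, ∀ y ∈ X, fderiv ℝ v (t, y) (1, f y) ≤ 0)
    (hvT : ∀ y ∈ M, 0 ≤ v (T, y)) :
    RoA f X M T ⊆ {x₀ | 0 ≤ v (0, x₀)} := by
  rintro _ ⟨x, rfl, hx, hxX, hxT⟩
  have hanti : AntitoneOn (fun t => v (t, x t)) (Icc 0 T) :=
    antitoneOn_comp_graph_of_fderiv_nonpos (hv.differentiable one_ne_zero) hx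
      fun t ht => hdecr t (Ioo_subset_Icc_self ht) (x t) (hxX t (Ioo_subset_Icc_self ht))
  exact (hvT _ hxT).trans
    (hanti (left_mem_Icc.2 hT.le) (right_mem_Icc.2 hT.le) hT.le)

/-- if `v` is `C¹`, decreases along the flow of `f` on `[0,T] × X`
(the derivative of `v` along trajectories, `∂ₜ v + ⟨∇ₓ v, f⟩`, encoded as the Fréchet
derivative of `v` applied to `(1, f y)`, is nonpositive there), and `v(T,·) ≥ 0` on `M`,
then `R_T^M ⊆ {x₀ : v(0,x₀) ≥ 0}`. -/
theorem sostab_stmt1 {n : ℕ}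
    (f : EuclideanSpace ℝ (Fin n) → EuclideanSpace ℝ (Fin n)) (hf : Continuous f)
    (X : Set (EuclideanSpace ℝ (Fin n))) (hX : IsClosed X)
    (M : Set (EuclideanSpace ℝ (Fin n))) (hM : IsClosed M) (hMX : M ⊆ X)
    (T : ℝ) (hT : 0 < T)
    (v : ℝ × EuclideanSpace ℝ (Fin n) → ℝ) (hv : ContDiff ℝ 1 v)
    (hdecr : ∀ t ∈ Icc (0 : ℝ) T, ∀ y ∈ X, fderiv ℝ v (t, y) (1, f y) ≤ 0)
    (hvT : ∀ y ∈ M, 0 ≤ v (T, y)) :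
    RoA f X M T ⊆ {x₀ | 0 ≤ v (0, x₀)} :=
  sostab_stmt1_general f X M T hT v hv hdecr hvT
end

section
/- Let f : ℝⁿ → ℝⁿ be continuous, X ⊆ ℝⁿ closed, M ⊆ X closed, and T > 0. Suppose v : ℝ × ℝⁿ → ℝ is of class C¹ and w : ℝⁿ → ℝ satisfy all four constraints: w(y) ≥ 0 for all y ∈ X; w(y) ≥ v(0,y) + 1 for all y ∈ X; ∂_t v(t,y) + ⟨∇_x v(t,y), f(y)⟩ ≤ 0 for all (t,y) ∈ [0,T] × X; and v(T,y) ≥ 0 for all y ∈ M. Then w(y) ≥ 𝟙_{R_T^M}(y) for every y ∈ X, where 𝟙_{R_T^M} is the indicator function of the region of attraction R_T^M (equal to 1 on R_T^M and 0 elsewhere). -/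
open Set

section AlongCurve

variable {E : Type*} [NormedAddCommGroup E] [NormedSpace ℝ E] {v : ℝ × E → ℝ} {x : ℝ → E}

theorem hasDerivAt_comp_prodMk {x' : E} {t : ℝ} (hv : DifferentiableAt ℝ v (t, x t))
    (hx : HasDerivAt x x' t) :
    HasDerivAt (fun s => v (s, x s)) (fderiv ℝ v (t, x t) (1, x')) t :=
  hv.hasFDerivAt.comp_hasDerivAt t ((hasDerivAt_id t).prodMk hx)

theorem antitoneOn_comp_prodMk {x' : ℝ → E} {a b : ℝ} (hv : Differentiable ℝ v)
    (hx : ∀ t ∈ Icc a b, HasDerivAt x (x' t) t)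
    (hdecr : ∀ t ∈ Icc a b, fderiv ℝ v (t, x t) (1, x' t) ≤ 0) :
    AntitoneOn (fun t => v (t, x t)) (Icc a b) := by
  have hderiv t (ht : t ∈ Icc a b) := hasDerivAt_comp_prodMk (hv (t, x t)) (hx t ht)
  exact antitoneOn_of_hasDerivWithinAt_nonpos (convex_Icc a b)
    (fun t ht => (hderiv t ht).continuousAt.continuousWithinAt)
    (fun t ht => (hderiv t (interior_subset ht)).hasDerivWithinAt)
    (fun t ht => hdecr t (interior_subset ht))

end AlongCurve

theorem nonneg_at_zero_of_mem_RoA {n : ℕ}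
    {f : EuclideanSpace ℝ (Fin n) → EuclideanSpace ℝ (Fin n)}
    {X M : Set (EuclideanSpace ℝ (Fin n))} {T : ℝ} (hT : 0 ≤ T)
    {v : ℝ × EuclideanSpace ℝ (Fin n) → ℝ} (hv : Differentiable ℝ v)
    (hdecr : ∀ t ∈ Icc (0 : ℝ) T, ∀ y ∈ X, fderiv ℝ v (t, y) (1, f y) ≤ 0)
    (hvT : ∀ y ∈ M, 0 ≤ v (T, y)) {y : EuclideanSpace ℝ (Fin n)} (hy : y ∈ RoA f X M T) :
    0 ≤ v (0, y) := by
  obtain ⟨x, rfl, hxd, hxX, hxT⟩ := hy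
  have hanti := antitoneOn_comp_prodMk hv hxd fun t ht => hdecr t ht (x t) (hxX t ht)
  calc 0 ≤ v (T, x T) := hvT (x T) hxT
    _ ≤ v (0, x 0) := hanti (left_mem_Icc.2 hT) (right_mem_Icc.2 hT) hT

theorem sostab_stmt3_general {n : ℕ}
    (f : EuclideanSpace ℝ (Fin n) → EuclideanSpace ℝ (Fin n))
    (X : Set (EuclideanSpace ℝ (Fin n)))
    (M : Set (EuclideanSpace ℝ (Fin n)))
    (T : ℝ) (hT : 0 < T)
    (v : ℝ × EuclideanSpace ℝ (Fin n) → ℝ) (hv : ContDiff ℝ 1 v)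
    (w : EuclideanSpace ℝ (Fin n) → ℝ)
    (hw0 : ∀ y ∈ X, 0 ≤ w y)
    (hwv : ∀ y ∈ X, v (0, y) + 1 ≤ w y)
    (hdecr : ∀ t ∈ Icc (0 : ℝ) T, ∀ y ∈ X, fderiv ℝ v (t, y) (1, f y) ≤ 0)
    (hvT : ∀ y ∈ M, 0 ≤ v (T, y)) :
    ∀ y ∈ X, (RoA f X M T).indicator (fun _ => (1 : ℝ)) y ≤ w y := by
  intro y hy
  by_cases hmem : y ∈ RoA f X M T
  · have hv0 := nonneg_at_zero_of_mem_RoA hT.le (hv.differentiable one_ne_zero) hdecr hvT hmem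
    rw [indicator_of_mem hmem]
    linarith [hwv y hy]
  · rw [indicator_of_notMem hmem]
    exact hw0 y hy

/-- if `w ≥ 0` on `X`, `w ≥ v(0,·) + 1` on `X`, `v` is `C¹` and decreases along
the flow of `f` on `[0,T] × X` (the derivative `∂ₜ v + ⟨∇ₓ v, f⟩` along trajectories, encoded
as the Fréchet derivative of `v` applied to `(1, f y)`, is nonpositive there), and
`v(T,·) ≥ 0` on `M`, then `w` dominates the indicator function of `R_T^M` on `X`. -/
theorem sostab_stmt3 {n : ℕ}
    (f : EuclideanSpace ℝ (Fin n) → EuclideanSpace ℝ (Fin n)) (hf : Continuous f)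
    (X : Set (EuclideanSpace ℝ (Fin n))) (hX : IsClosed X)
    (M : Set (EuclideanSpace ℝ (Fin n))) (hM : IsClosed M) (hMX : M ⊆ X)
    (T : ℝ) (hT : 0 < T)
    (v : ℝ × EuclideanSpace ℝ (Fin n) → ℝ) (hv : ContDiff ℝ 1 v)
    (w : EuclideanSpace ℝ (Fin n) → ℝ)
    (hw0 : ∀ y ∈ X, 0 ≤ w y)
    (hwv : ∀ y ∈ X, v (0, y) + 1 ≤ w y)
    (hdecr : ∀ t ∈ Icc (0 : ℝ) T, ∀ y ∈ X, fderiv ℝ v (t, y) (1, f y) ≤ 0)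
    (hvT : ∀ y ∈ M, 0 ≤ v (T, y)) :
    ∀ y ∈ X, (RoA f X M T).indicator (fun _ => (1 : ℝ)) y ≤ w y :=
  sostab_stmt3_general f X M T hT v hv w hw0 hwv hdecr hvT
end

section
/- Let f : ℝⁿ → ℝⁿ be continuous, X ⊆ ℝⁿ closed and Lebesgue-measurable, M ⊆ X closed, and T > 0, and assume the region of attraction R_T^M is Lebesgue-measurable. Suppose v : ℝ × ℝⁿ → ℝ is of class C¹ and w : ℝⁿ → ℝ is Lebesgue-integrable on X, and they satisfy: w(y) ≥ 0 for all y ∈ X; w(y) ≥ v(0,y) + 1 for all y ∈ X; ∂_t v(t,y) + ⟨∇_x v(t,y), f(y)⟩ ≤ 0 for all (t,y) ∈ [0,T] × X; and v(T,y) ≥ 0 for all y ∈ M. Then ∫_X w dx ≥ vol(R_T^M), where vol denotes n-dimensional Lebesgue measure. -/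
open Set MeasureTheory

theorem measure_le_ofReal_setIntegral_of_one_le {α : Type*} [MeasurableSpace α] {μ : Measure α}
    {s X : Set α} {w : α → ℝ} (hXm : MeasurableSet X) (hwint : IntegrableOn w X μ)
    (hw0 : ∀ y ∈ X, 0 ≤ w y) (hsX : s ⊆ X) (hs : ∀ y ∈ s, 1 ≤ w y) :
    μ s ≤ ENNReal.ofReal (∫ y in X, w y ∂μ) :=
  calc μ s ≤ μ ({y | 1 ≤ ENNReal.ofReal (w y)} ∩ X) :=
        measure_mono fun y hy => ⟨ENNReal.one_le_ofReal.2 (hs y hy), hsX hy⟩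
    _ ≤ μ.restrict X {y | 1 ≤ ENNReal.ofReal (w y)} := Measure.le_restrict_apply _ _
    _ ≤ ∫⁻ y in X, ENNReal.ofReal (w y) ∂μ := by
        simpa only [one_mul] using
          mul_meas_ge_le_lintegral₀ hwint.aemeasurable.ennreal_ofReal 1
    _ = ENNReal.ofReal (∫ y in X, w y ∂μ) :=
        (ofReal_integral_eq_lintegral_ofReal hwint (ae_restrict_of_forall_mem hXm hw0)).symm

theorem antitoneOn_comp_prodMk_of_fderiv_nonpos {E : Type*} [NormedAddCommGroup E]
    [NormedSpace ℝ E] {v : ℝ × E → ℝ} (hv : Differentiable ℝ v) {x x' : ℝ → E}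
    {a b : ℝ}
    (hx : ∀ t ∈ Icc a b, HasDerivAt x (x' t) t)
    (hdecr : ∀ t ∈ Icc a b, fderiv ℝ v (t, x t) (1, x' t) ≤ 0) :
    AntitoneOn (fun t => v (t, x t)) (Icc a b) := by
  have hderiv : ∀ t ∈ Icc a b,
      HasDerivAt (fun t => v (t, x t)) (fderiv ℝ v (t, x t) (1, x' t)) t := fun t ht =>
    (hv (t, x t)).hasFDerivAt.comp_hasDerivAt t ((hasDerivAt_id t).prodMk (hx t ht))
  refine antitoneOn_of_deriv_nonpos (convex_Icc a b)
    (fun t ht => (hderiv t ht).continuousAt.continuousWithinAt) ?_ ?_ <;>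
    rw [interior_Icc] <;> intro t ht
  · exact (hderiv t (Ioo_subset_Icc_self ht)).differentiableAt.differentiableWithinAt
  · rw [(hderiv t (Ioo_subset_Icc_self ht)).deriv]
    exact hdecr t (Ioo_subset_Icc_self ht)

section RegionOfAttraction

variable {n : ℕ} {f : EuclideanSpace ℝ (Fin n) → EuclideanSpace ℝ (Fin n)}
  {X M : Set (EuclideanSpace ℝ (Fin n))} {T : ℝ}

theorem RoA_subset (hT : 0 ≤ T) : RoA f X M T ⊆ X := by
  rintro x₀ ⟨x, rfl, -, hxX, -⟩
  exact hxX 0 (left_mem_Icc.2 hT)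

theorem nonneg_of_mem_RoA {v : ℝ × EuclideanSpace ℝ (Fin n) → ℝ}
    (hv : Differentiable ℝ v) (hT : 0 ≤ T)
    (hdecr : ∀ t ∈ Icc (0 : ℝ) T, ∀ y ∈ X, fderiv ℝ v (t, y) (1, f y) ≤ 0)
    (hvT : ∀ y ∈ M, 0 ≤ v (T, y)) {x₀ : EuclideanSpace ℝ (Fin n)}
    (hx₀ : x₀ ∈ RoA f X M T) :
    0 ≤ v (0, x₀) := by
  obtain ⟨x, rfl, hxd, hxX, hxM⟩ := hx₀
  have hanti := antitoneOn_comp_prodMk_of_fderiv_nonpos hv hxd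
    fun t ht => hdecr t ht _ (hxX t ht)
  exact (hvT _ hxM).trans (hanti (left_mem_Icc.2 hT) (right_mem_Icc.2 hT) hT)

end RegionOfAttraction

theorem sostab_stmt4_general {n : ℕ}
    (f : EuclideanSpace ℝ (Fin n) → EuclideanSpace ℝ (Fin n))
    (X : Set (EuclideanSpace ℝ (Fin n))) (hXm : MeasurableSet X)
    (M : Set (EuclideanSpace ℝ (Fin n)))
    (T : ℝ) (hT : 0 < T)
    (v : ℝ × EuclideanSpace ℝ (Fin n) → ℝ) (hv : ContDiff ℝ 1 v)
    (w : EuclideanSpace ℝ (Fin n) → ℝ) (hwint : IntegrableOn w X volume)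
    (hw0 : ∀ y ∈ X, 0 ≤ w y)
    (hwv : ∀ y ∈ X, v (0, y) + 1 ≤ w y)
    (hdecr : ∀ t ∈ Icc (0 : ℝ) T, ∀ y ∈ X, fderiv ℝ v (t, y) (1, f y) ≤ 0)
    (hvT : ∀ y ∈ M, 0 ≤ v (T, y)) :
    volume (RoA f X M T) ≤ ENNReal.ofReal (∫ y in X, w y) := by
  refine measure_le_ofReal_setIntegral_of_one_le hXm hwint hw0 (RoA_subset hT.le) fun y hy => ?_
  linarith [hwv y (RoA_subset hT.le hy),
    nonneg_of_mem_RoA (hv.differentiable one_ne_zero) hT.le hdecr hvT hy]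

/-- for any feasible pair `(v, w)` of the outer RoA linear program
(`w ≥ 0` on `X`, `w ≥ v(0,·) + 1` on `X`, `∂ₜ v + ⟨∇ₓ v, f⟩ ≤ 0` on `[0,T] × X`,
`v(T,·) ≥ 0` on `M`), the integral of `w` over `X` bounds the Lebesgue volume
of the region of attraction from above: `∫_X w ≥ vol(R_T^M)`. -/
theorem sostab_stmt4 {n : ℕ}
    (f : EuclideanSpace ℝ (Fin n) → EuclideanSpace ℝ (Fin n)) (hf : Continuous f)
    (X : Set (EuclideanSpace ℝ (Fin n))) (hX : IsClosed X) (hXm : MeasurableSet X)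
    (M : Set (EuclideanSpace ℝ (Fin n))) (hM : IsClosed M) (hMX : M ⊆ X)
    (T : ℝ) (hT : 0 < T)
    (hRm : MeasurableSet (RoA f X M T))
    (v : ℝ × EuclideanSpace ℝ (Fin n) → ℝ) (hv : ContDiff ℝ 1 v)
    (w : EuclideanSpace ℝ (Fin n) → ℝ) (hwint : IntegrableOn w X volume)
    (hw0 : ∀ y ∈ X, 0 ≤ w y)
    (hwv : ∀ y ∈ X, v (0, y) + 1 ≤ w y)
    (hdecr : ∀ t ∈ Icc (0 : ℝ) T, ∀ y ∈ X, fderiv ℝ v (t, y) (1, f y) ≤ 0)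
    (hvT : ∀ y ∈ M, 0 ≤ v (T, y)) :
    volume (RoA f X M T) ≤ ENNReal.ofReal (∫ y in X, w y) :=
  sostab_stmt4_general f X hXm M T hT v hv w hwint hw0 hwv hdecr hvT
end

section
/- Let f : ℝⁿ → ℝⁿ be continuous, X ⊆ ℝⁿ closed, M ⊆ X closed, and T > 0. Suppose v : ℝ × ℝⁿ → ℝ is of class C¹ and w : ℝⁿ → ℝ satisfy: w(y) ≥ 0 for all y ∈ X; w(y) ≥ v(0,y) + 1 for all y ∈ X; ∂_t v(t,y) + ⟨∇_x v(t,y), f(y)⟩ ≤ 0 for all (t,y) ∈ [0,T] × X; and v(T,y) ≥ 0 for all y ∈ M. Then the chain of inclusions R_T^M ⊆ {y ∈ ℝⁿ : v(0,y) ≥ 0} ∩ X ⊆ {y ∈ X : w(y) ≥ 1} holds. -/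
open Set

section TimeGraph

variable {E : Type*} [NormedAddCommGroup E] [NormedSpace ℝ E] {v : ℝ × E → ℝ} {x x' : ℝ → E}

theorem HasDerivAt.comp_timeGraph {t : ℝ} (hv : DifferentiableAt ℝ v (t, x t))
    (hx : HasDerivAt x (x' t) t) :
    HasDerivAt (fun s => v (s, x s)) (fderiv ℝ v (t, x t) (1, x' t)) t :=
  hv.hasFDerivAt.comp_hasDerivAt t ((hasDerivAt_id t).prodMk hx)

theorem antitoneOn_comp_timeGraph (hv : Differentiable ℝ v) {a b : ℝ}
    (hx : ∀ t ∈ Icc a b, HasDerivAt x (x' t) t)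
    (hdecr : ∀ t ∈ Ioo a b, fderiv ℝ v (t, x t) (1, x' t) ≤ 0) :
    AntitoneOn (fun t => v (t, x t)) (Icc a b) := by
  have hderiv : ∀ t ∈ Icc a b,
      HasDerivAt (fun s => v (s, x s)) (fderiv ℝ v (t, x t) (1, x' t)) t :=
    fun t ht => HasDerivAt.comp_timeGraph (hv _) (hx t ht)
  refine antitoneOn_of_hasDerivWithinAt_nonpos (convex_Icc a b)
    (fun t ht => (hderiv t ht).continuousAt.continuousWithinAt)
    (fun t ht => (hderiv t (interior_subset ht)).hasDerivWithinAt) ?_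
  simpa only [interior_Icc] using hdecr

end TimeGraph

theorem RoA_subset_nonneg_inter {n : ℕ} {f : EuclideanSpace ℝ (Fin n) → EuclideanSpace ℝ (Fin n)}
    {X M : Set (EuclideanSpace ℝ (Fin n))} {T : ℝ} (hT : 0 ≤ T)
    {v : ℝ × EuclideanSpace ℝ (Fin n) → ℝ} (hv : Differentiable ℝ v)
    (hdecr : ∀ t ∈ Icc (0 : ℝ) T, ∀ y ∈ X, fderiv ℝ v (t, y) (1, f y) ≤ 0)
    (hvT : ∀ y ∈ M, 0 ≤ v (T, y)) :
    RoA f X M T ⊆ {y | 0 ≤ v (0, y)} ∩ X := by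
  rintro _ ⟨x, rfl, hderiv, hxX, hxM⟩
  have hanti : AntitoneOn (fun t => v (t, x t)) (Icc 0 T) :=
    antitoneOn_comp_timeGraph (x' := f ∘ x) hv hderiv
      fun t ht => hdecr t (Ioo_subset_Icc_self ht) _ (hxX t (Ioo_subset_Icc_self ht))
  have h0T : v (T, x T) ≤ v (0, x 0) :=
    hanti (left_mem_Icc.2 hT) (right_mem_Icc.2 hT) hT
  exact ⟨(hvT _ hxM).trans h0T, hxX 0 (left_mem_Icc.2 hT)⟩

theorem sostab_stmt14_general {n : ℕ}
    (f : EuclideanSpace ℝ (Fin n) → EuclideanSpace ℝ (Fin n))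
    (X : Set (EuclideanSpace ℝ (Fin n)))
    (M : Set (EuclideanSpace ℝ (Fin n)))
    (T : ℝ) (hT : 0 < T)
    (v : ℝ × EuclideanSpace ℝ (Fin n) → ℝ) (hv : ContDiff ℝ 1 v)
    (w : EuclideanSpace ℝ (Fin n) → ℝ)
    (hwv : ∀ y ∈ X, v (0, y) + 1 ≤ w y)
    (hdecr : ∀ t ∈ Icc (0 : ℝ) T, ∀ y ∈ X, fderiv ℝ v (t, y) (1, f y) ≤ 0)
    (hvT : ∀ y ∈ M, 0 ≤ v (T, y)) :
    RoA f X M T ⊆ {y | 0 ≤ v (0, y)} ∩ X ∧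
      {y | 0 ≤ v (0, y)} ∩ X ⊆ {y | y ∈ X ∧ 1 ≤ w y} := by
  refine ⟨RoA_subset_nonneg_inter hT.le (hv.differentiable one_ne_zero) hdecr hvT, ?_⟩
  rintro y ⟨hy, hyX⟩
  exact ⟨hyX, by linarith [hwv y hyX, show (0 : ℝ) ≤ v (0, y) from hy]⟩

/-- outer-approximation proposition: for any feasible pair `(v, w)` of the
outer RoA linear program (`w ≥ 0` on `X`, `w ≥ v(0,·) + 1` on `X`,
`∂ₜ v + ⟨∇ₓ v, f⟩ ≤ 0` on `[0,T] × X` — encoded via the Fréchet derivative of `v` applied to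
`(1, f y)` — and `v(T,·) ≥ 0` on `M`), the chain of inclusions
`R_T^M ⊆ {v(0,·) ≥ 0} ∩ X ⊆ {y ∈ X : w(y) ≥ 1}` holds. -/
theorem sostab_stmt14 {n : ℕ}
    (f : EuclideanSpace ℝ (Fin n) → EuclideanSpace ℝ (Fin n)) (hf : Continuous f)
    (X : Set (EuclideanSpace ℝ (Fin n))) (hX : IsClosed X)
    (M : Set (EuclideanSpace ℝ (Fin n))) (hM : IsClosed M) (hMX : M ⊆ X)
    (T : ℝ) (hT : 0 < T)
    (v : ℝ × EuclideanSpace ℝ (Fin n) → ℝ) (hv : ContDiff ℝ 1 v)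
    (w : EuclideanSpace ℝ (Fin n) → ℝ)
    (hw0 : ∀ y ∈ X, 0 ≤ w y)
    (hwv : ∀ y ∈ X, v (0, y) + 1 ≤ w y)
    (hdecr : ∀ t ∈ Icc (0 : ℝ) T, ∀ y ∈ X, fderiv ℝ v (t, y) (1, f y) ≤ 0)
    (hvT : ∀ y ∈ M, 0 ≤ v (T, y)) :
    RoA f X M T ⊆ {y | 0 ≤ v (0, y)} ∩ X ∧
      {y | 0 ≤ v (0, y)} ∩ X ⊆ {y | y ∈ X ∧ 1 ≤ w y} :=
  sostab_stmt14_general f X M T hT v hv w hwv hdecr hvT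
end
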